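/- Let n ≥ d ≥ 1 and define A(x) = 2^(n-d+1) * ∏_{r=d}^{n} (1 - x/r). Then A expands in the Krawtchouk basis as A(x) = ∑_{i=0}^{n} α_i P_i(x) evaluated at integers 0 ≤ x ≤ n, where α_i = C(n - i, d - 1) / C(n, n - d + 1). -/

import Mathlib

/-- Binary Krawtchouk polynomial (q = 2) with parameter `n`, evaluated at a
natural number argument `x`. -/
def kraw (n k x : ℕ) : ℤ :=
  ∑ j ∈ Finset.range (k + 1),
    (-1 : ℤ) ^ j * (Nat.choose x j : ℤ) * (Nat.choose (n - x) (k - j) : ℤ)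

/-!
The Krawtchouk polynomials have the generating function `∑ₖ Kₖ(x) zᵏ = (1 - z)ˣ (1 + z)ⁿ⁻ˣ`,
whose homogenization is `∑ₖ Kₖ(x) bᵏ aⁿ⁻ᵏ = (a - b)ˣ (a + b)ⁿ⁻ˣ`. Substituting `a = t + 1`,
`b = 1` and comparing coefficients of `tᵐ` gives `∑ₖ C(n - k, m) Kₖ(x) = 2ⁿ⁻ᵐ C(n - x, n - m)`.
For `m = d - 1` this is `C(n, n - d + 1) A(x)`, because telescoping
`C(a, j + 1) (j + 1) = C(a, j) (a - j)` gives
`∏_{r=d}^{n} (1 - x/r) = C(n - x, n - d + 1) / C(n, n - d + 1)`.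
-/

open Finset Polynomial

variable {R : Type*} [CommRing R]

namespace Polynomial

theorem coeff_one_sub_X_pow (x j : ℕ) :
    ((1 - X : R[X]) ^ x).coeff j = (-1) ^ j * x.choose j := by
  have : (1 - X : R[X]) = C (-1) * X + 1 := by simp [sub_eq_neg_add]
  rw [this, add_pow, finsetSum_coeff]
  simp only [one_pow, mul_one, mul_pow, ← C_pow, ← C_eq_natCast, mul_right_comm _ (X ^ _),
    ← C_mul, coeff_C_mul_X_pow]
  simp +contextual [Nat.choose_eq_zero_of_lt]

theorem homogenize_pow {p : R[X]} {m : ℕ} (hp : p.natDegree ≤ m) (k : ℕ) :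
    (p ^ k).homogenize (k * m) = p.homogenize m ^ k := by
  induction k with
  | zero => simp
  | succ k ih =>
    rw [pow_succ, add_mul, one_mul, homogenize_mul _ _ (natDegree_pow_le_of_le k hp) hp, ih,
      pow_succ]

theorem eval_homogenize_eq_sum (p : R[X]) (n : ℕ) (v : Fin 2 → R) :
    MvPolynomial.eval v (p.homogenize n) =
      ∑ k ∈ range (n + 1), p.coeff k * v 0 ^ k * v 1 ^ (n - k) := by
  simp [homogenize, MvPolynomial.eval_monomial, Finsupp.prod_fintype,
    Nat.sum_antidiagonal_eq_sum_range_succ_mk, mul_assoc]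

end Polynomial

theorem coeff_one_sub_X_pow_mul_one_add_X_pow (n x k : ℕ) :
    ((1 - X : R[X]) ^ x * (1 + X) ^ (n - x)).coeff k = (kraw n k x : R) := by
  rw [coeff_mul, Nat.sum_antidiagonal_eq_sum_range_succ
    (fun j l => ((1 - X : R[X]) ^ x).coeff j * ((1 + X) ^ (n - x)).coeff l), kraw]
  simp [coeff_one_sub_X_pow, coeff_one_add_X_pow, mul_assoc]

theorem sum_kraw_mul_pow_mul_pow {n x : ℕ} (hx : x ≤ n) (a b : R) :
    ∑ k ∈ range (n + 1), (kraw n k x : R) * b ^ k * a ^ (n - k) =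
      (a - b) ^ x * (a + b) ^ (n - x) := by
  have hG : ((1 - X : R[X]) ^ x * (1 + X) ^ (n - x)).homogenize n =
      (.X 1 - .X 0) ^ x * (.X 1 + .X 0) ^ (n - x) := by
    have h1 : (1 - X : R[X]).natDegree ≤ 1 := by compute_degree
    have h2 : (1 + X : R[X]).natDegree ≤ 1 := by compute_degree
    have hmul := homogenize_mul _ _ (natDegree_pow_le_of_le x h1)
      (natDegree_pow_le_of_le (n - x) h2)
    have e1 := homogenize_pow h1 x
    have e2 := homogenize_pow h2 (n - x)
    rw [mul_one, mul_one, Nat.add_sub_cancel' hx] at hmul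
    rw [mul_one] at e1 e2
    rw [hmul, e1, e2]
    simp
  have := congrArg (MvPolynomial.eval ![b, a]) hG
  simpa [eval_homogenize_eq_sum, coeff_one_sub_X_pow_mul_one_add_X_pow] using this

theorem sum_choose_mul_kraw {n x m : ℕ} (hx : x ≤ n) (hm : m ≤ n) :
    ∑ k ∈ range (n + 1), ((n - k).choose m : ℤ) * kraw n k x =
      2 ^ (n - m) * (n - x).choose (n - m) := by
  have h := congrArg (coeff · m) (sum_kraw_mul_pow_mul_pow hx (X + 1 : ℤ[X]) 1)
  have two : (X + 1 + 1 : ℤ[X]) = X + C 2 := by rw [add_assoc, one_add_one_eq_two, C_ofNat]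
  simp only [finsetSum_coeff, one_pow, mul_one, add_sub_cancel_right, two, ← C_eq_intCast,
    coeff_C_mul, Int.cast_id, coeff_X_add_one_pow, coeff_X_pow_mul', coeff_X_add_C_pow] at h
  simp_rw [mul_comm (kraw n _ x : ℤ)] at h
  rw [h]
  split_ifs with hxm
  · rw [Nat.sub_sub_sub_cancel_right hxm, ← Nat.choose_symm (by omega : m - x ≤ n - x),
      Nat.sub_sub_sub_cancel_right hxm]
  · rw [Nat.choose_eq_zero_of_lt (by omega : n - x < n - m), Nat.cast_zero, mul_zero]

theorem Nat.cast_choose_succ_right_eq (a k : ℕ) :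
    (a.choose (k + 1) : R) * (k + 1) = a.choose k * (a - k) := by
  rcases le_or_gt k a with hk | hk
  · have := congrArg (Nat.cast : ℕ → R) (a.choose_succ_right_eq k)
    push_cast [Nat.cast_sub hk] at this
    exact this
  · simp [Nat.choose_eq_zero_of_lt hk, Nat.choose_eq_zero_of_lt (hk.trans k.lt_succ_self)]

theorem prod_Icc_eq_prod_range_sub {M : Type*} [CommMonoid M] (f : ℕ → M) (d n : ℕ) :
    ∏ r ∈ Icc d n, f r = ∏ i ∈ range (n + 1 - d), f (n - i) := by
  rw [range_eq_Ico, prod_Ico_reflect f 0 (Nat.sub_le _ _)]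
  rcases le_or_gt d (n + 1) with hd | hd
  · rw [Nat.sub_sub_self hd, Nat.sub_zero, Ico_add_one_right_eq_Icc]
  · rw [Icc_eq_empty (by omega), Nat.sub_eq_zero_of_le hd.le, Nat.sub_zero, Ico_self]

theorem prod_range_one_sub_div_eq_choose_div_choose {K : Type*} [Field K] [CharZero K]
    {n x k : ℕ} (hx : x ≤ n) (hk : k ≤ n) :
    ∏ i ∈ range k, (1 - (x : K) / (n - i : ℕ)) = (n - x).choose k / n.choose k := by
  induction k with
  | zero => simp
  | succ k ih =>
    have hnk : ((n - k : ℕ) : K) ≠ 0 := by exact_mod_cast (by omega : n - k ≠ 0)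
    have hC : (n.choose k : K) ≠ 0 := by exact_mod_cast (Nat.choose_pos (by omega)).ne'
    have hC' : (n.choose (k + 1) : K) ≠ 0 := by exact_mod_cast (Nat.choose_pos hk).ne'
    have h1 := Nat.cast_choose_succ_right_eq (R := K) n k
    have h2 := Nat.cast_choose_succ_right_eq (R := K) (n - x) k
    rw [prod_range_succ, ih (by omega)]
    field_simp
    push_cast [Nat.cast_sub hx, Nat.cast_sub (by omega : k ≤ n)] at h2 ⊢
    refine mul_right_cancel₀ (Nat.cast_add_one_ne_zero k) ?_
    linear_combination
      ((n - x).choose k * ((n : K) - x - k)) * h1 - (n.choose k * ((n : K) - k)) * h2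

/-- Expansion of `A(x) = 2^(n-d+1) ∏_{r=d}^n (1 - x/r)` in the Krawtchouk
basis, with coefficients `α_i = C(n-i, d-1) / C(n, n-d+1)`. -/
theorem krawtchouk_expansion_of_A (n d : ℕ) (hd1 : 1 ≤ d) (hdn : d ≤ n)
    (x : ℕ) (hx : x ≤ n) :
    (2 : ℚ) ^ (n - d + 1) * ∏ r ∈ Finset.Icc d n, (1 - (x : ℚ) / (r : ℚ))
      = ∑ i ∈ Finset.range (n + 1),
          ((Nat.choose (n - i) (d - 1) : ℚ) / (Nat.choose n (n - d + 1) : ℚ)) *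
            (kraw n i x : ℚ) := by
  have hj : n + 1 - d = n - (d - 1) := by omega
  have hj' : n - d + 1 = n - (d - 1) := by omega
  have hsum := sum_choose_mul_kraw hx (m := d - 1) (by omega)
  rw [prod_Icc_eq_prod_range_sub, hj,
    prod_range_one_sub_div_eq_choose_div_choose hx (Nat.sub_le _ _), hj']
  simp_rw [div_mul_eq_mul_div, ← sum_div]
  rw [← mul_div_assoc]
  congr 1
  exact_mod_cast hsum.symm
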